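/- arXiv:2505.21268 — 3 statements merged into one kernel-verified Lean document; each statement's English description precedes it below -/
import Mathlib

section
/- Let 0 < θ ≤ 1/6 and define f_θ(z) = (1−θ) + θz for z ∈ ℂ. Then f_θ(𝔻) ⊆ f_θ(𝔻)², i.e., the image of the open unit disk under f_θ is contained in the set { f_θ(z)² : z ∈ 𝔻 }. Equivalently, the open disk of center 1−θ and radius θ is contained in the set of squares of points of that disk. -/
/-!
The map `z ↦ (1 - θ) + θ z` sends `𝔻` onto the disk `B(a, 1 - a)`, `a = 1 - θ`, so it suffices
that every `v` in that disk has a square root in it. Take the root `s` with `Re s ≥ 0` and put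
`r = |s|²`, `t = Re s`. Then `|v - a| < 1 - a` reads `r² + 2ar + 2a - 1 < 4at²`, while
`|s - a| < 1 - a` reads `r + 2a - 1 < 2at`; the first implies the second as soon as `a ≥ 1/2`.
-/

open Metric

theorem Complex.exists_sq_eq_of_re_nonneg (v : ℂ) : ∃ s : ℂ, s ^ 2 = v ∧ 0 ≤ s.re := by
  obtain ⟨s, hs⟩ := IsAlgClosed.exists_pow_nat_eq v two_pos
  rcases le_total 0 s.re with h | h
  · exact ⟨s, hs, h⟩
  · exact ⟨-s, by rw [neg_sq, hs], by simpa using h⟩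


theorem add_two_mul_sub_one_lt_of_sq_lt {a r t : ℝ} (ha : 1 / 2 ≤ a) (ha1 : a < 1)
    (hr0 : 0 ≤ r) (hr1 : r < 1) (ht : 0 ≤ t)
    (h : r ^ 2 + 2 * a * r + 2 * a - 1 < 4 * a * t ^ 2) :
    r + 2 * a - 1 < 2 * a * t := by
  -- `a (r² + 2ar + 2a - 1) - (r + 2a - 1)² = (1 - a) (1 - r) (r + 2a - 1) ≥ 0`
  have key : (r + 2 * a - 1) ^ 2 < (2 * a * t) ^ 2 := by
    nlinarith [mul_nonneg (mul_nonneg (sub_nonneg.2 ha1.le) (sub_nonneg.2 hr1.le))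
      (show 0 ≤ r + 2 * a - 1 by linarith)]
  exact lt_of_pow_lt_pow_left₀ 2 (by positivity) key

theorem Complex.norm_sub_lt_of_norm_sq_sub_lt {a : ℝ} (ha : 1 / 2 ≤ a) {s : ℂ}
    (hs : 0 ≤ s.re) (h : ‖s ^ 2 - a‖ < 1 - a) : ‖s - a‖ < 1 - a := by
  have ha1 : a < 1 := by linarith [norm_nonneg (s ^ 2 - a)]
  have hr1 : ‖s‖ ^ 2 < 1 := by
    calc ‖s‖ ^ 2 = ‖s ^ 2 - a + a‖ := by rw [sub_add_cancel, norm_pow]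
      _ ≤ ‖s ^ 2 - a‖ + a :=
        (norm_add_le _ _).trans_eq (by rw [Complex.norm_real, Real.norm_of_nonneg (by linarith)])
      _ < 1 := by linarith
  have hsq := (sq_lt_sq₀ (norm_nonneg _) (by linarith)).2 h
  rw [← sq_lt_sq₀ (norm_nonneg _) (by linarith)]
  have hr : ‖s‖ ^ 2 = s.re ^ 2 + s.im ^ 2 := by
    rw [Complex.sq_norm, Complex.normSq_apply]; ring
  rw [Complex.sq_norm, Complex.normSq_apply] at hsq ⊢
  simp only [Complex.sub_re, Complex.sub_im, Complex.ofReal_re, Complex.ofReal_im, pow_two,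
    Complex.mul_re, Complex.mul_im] at hsq ⊢
  have := add_two_mul_sub_one_lt_of_sq_lt ha ha1 (sq_nonneg ‖s‖) hr1 hs (t := s.re)
    (by rw [hr]; nlinarith [hsq])
  rw [hr] at this
  nlinarith [this]

theorem Complex.exists_sq_eq_mem_ball {a : ℝ} (ha : 1 / 2 ≤ a) {v : ℂ}
    (hv : v ∈ ball (a : ℂ) (1 - a)) : ∃ s ∈ ball (a : ℂ) (1 - a), s ^ 2 = v := by
  obtain ⟨s, rfl, hs⟩ := exists_sq_eq_of_re_nonneg v
  rw [mem_ball_iff_norm] at hv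
  exact ⟨s, mem_ball_iff_norm.2 (norm_sub_lt_of_norm_sq_sub_lt ha hs hv), rfl⟩

theorem Complex.image_add_mul_ball_zero_one {θ : ℝ} (hθ : 0 < θ) (c : ℂ) :
    (fun z : ℂ => c + (θ : ℂ) * z) '' ball 0 1 = ball c θ := by
  have hθ' : (θ : ℂ) ≠ 0 := Complex.ofReal_ne_zero.2 hθ.ne'
  have hdist (z : ℂ) : dist (c + θ * z) c = θ * ‖z‖ := by
    rw [dist_eq_norm, add_sub_cancel_left, norm_mul, Complex.norm_real,
      Real.norm_of_nonneg hθ.le]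
  ext w
  constructor
  · rintro ⟨z, hz, rfl⟩
    rw [mem_ball, hdist]
    exact mul_lt_of_lt_one_right hθ (mem_ball_zero_iff.1 hz)
  · intro hw
    refine ⟨(w - c) / θ, ?_, by field_simp; ring⟩
    rw [mem_ball_zero_iff, norm_div, Complex.norm_real, Real.norm_of_nonneg hθ.le,
      div_lt_one hθ, ← dist_eq_norm]
    exact hw

/-- For `0 < θ ≤ 1/6` and `f_θ(z) = (1-θ) + θ z`, the image `f_θ(𝔻)` is contained in
the set of squares `{ f_θ(w)^2 : w ∈ 𝔻 }`. -/
theorem stmt_4 (θ : ℝ) (hθ : θ ∈ Set.Ioc 0 (1 / 6)) :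
    (fun z : ℂ => (1 - (θ : ℂ)) + (θ : ℂ) * z) '' Metric.ball (0 : ℂ) 1 ⊆
      {w : ℂ | ∃ z ∈ Metric.ball (0 : ℂ) 1, ((1 - (θ : ℂ)) + (θ : ℂ) * z) ^ 2 = w} := by
  obtain ⟨hθ0, hθ6⟩ := hθ
  have hball : ball ((1 - θ : ℝ) : ℂ) (1 - (1 - θ)) = ball (1 - (θ : ℂ)) θ := by
    push_cast; rw [sub_sub_cancel]
  rw [Complex.image_add_mul_ball_zero_one hθ0]
  intro v hv
  obtain ⟨s, hs, rfl⟩ := Complex.exists_sq_eq_mem_ball (by linarith) (hball ▸ hv)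
  rw [hball, ← Complex.image_add_mul_ball_zero_one hθ0] at hs
  obtain ⟨z, hz, rfl⟩ := hs
  exact ⟨z, hz, rfl⟩
end

section
/- Let X be a Banach space and let Θ : (0,1) → ℝ² be a continuous integrable map, with the ℓ^p norm on ℝ² for some 1 < p < ∞. Then ‖∫₀¹ Θ(t) dt‖_{ℓ^p} ≤ ∫₀¹ ‖Θ(t)‖_{ℓ^p} dt, and equality holds if and only if either Θ(t₀) = 0 for almost every t₀, or there exists a set M ⊆ (0,1) of full measure and t₀ ∈ M with Θ(t₀) ≠ 0 such that for every t ∈ M there is λ_t ≥ 0 with Θ(t) = λ_t Θ(t₀). -/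
/-!
Since `1 < p < ∞`, the `ℓ^p` norm is strictly convex: `‖·‖ ^ p = ∑ |xᵢ| ^ p` is a sum of strictly
convex functions of the coordinates. The inequality is the triangle inequality for the Bochner
integral. If equality holds, a norming functional `g` of `∫ Θ` satisfies `∫ (‖Θ‖ - g ∘ Θ) = 0`
with nonnegative integrand, so `g (Θ t) = ‖Θ t‖` almost everywhere; any two such values `x, y`
satisfy `‖x + y‖ ≥ g (x + y) = ‖x‖ + ‖y‖`, which in a strictly convex space puts them on a common
ray. Conversely, if `Θ = λ • Θ t₀` with `λ ≥ 0`, then `λ = ‖Θ‖ / ‖Θ t₀‖` and both sides equal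
`∫ ‖Θ‖`.
-/

open MeasureTheory
open scoped ENNReal

theorem PiLp.strictConvexOn_sum_apply (p : ℝ≥0∞) {ι : Type*} [Fintype ι] {β : ι → Type*}
    [∀ i, AddCommGroup (β i)] [∀ i, Module ℝ (β i)] {f : ∀ i, β i → ℝ}
    (hf : ∀ i, StrictConvexOn ℝ Set.univ (f i)) :
    StrictConvexOn ℝ Set.univ fun x : PiLp p β => ∑ i, f i (x i) := by
  refine ⟨convex_univ, fun x _ y _ hxy a b ha hb hab => ?_⟩
  obtain ⟨i₀, hi₀⟩ : ∃ i, x i ≠ y i := by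
    by_contra! h
    exact hxy (WithLp.ofLp_injective p (funext h))
  simp only [WithLp.ofLp_add, WithLp.ofLp_smul, Pi.add_apply, Pi.smul_apply, Finset.smul_sum,
    ← Finset.sum_add_distrib]
  exact Finset.sum_lt_sum (fun i _ => (hf i).convexOn.2 trivial trivial ha.le hb.le hab)
    ⟨i₀, Finset.mem_univ _, (hf i₀).2 trivial trivial hi₀ ha hb hab⟩

section NormedSpace

variable {E : Type*} [NormedAddCommGroup E] [NormedSpace ℝ E]

theorem strictConvexOn_norm_rpow [StrictConvexSpace ℝ E] {q : ℝ} (hq : 1 < q) :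
    StrictConvexOn ℝ Set.univ fun x : E => ‖x‖ ^ q := by
  have hq0 : 0 < q := zero_lt_one.trans hq
  refine ⟨convex_univ, fun x _ y _ hxy a b ha hb hab => ?_⟩
  by_cases hn : ‖x‖ = ‖y‖
  · calc ‖a • x + b • y‖ ^ q < ‖y‖ ^ q :=
          Real.rpow_lt_rpow (norm_nonneg _) (norm_combo_lt_of_ne hn.le le_rfl hxy ha hb hab) hq0
      _ = a • ‖x‖ ^ q + b • ‖y‖ ^ q := by rw [hn, smul_eq_mul, smul_eq_mul, ← add_mul, hab, one_mul]
  · calc ‖a • x + b • y‖ ^ q ≤ (a • ‖x‖ + b • ‖y‖) ^ q := by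
          gcongr
          calc ‖a • x + b • y‖ ≤ ‖a • x‖ + ‖b • y‖ := norm_add_le _ _
            _ = a * ‖x‖ + b * ‖y‖ := by rw [norm_smul_of_nonneg ha.le, norm_smul_of_nonneg hb.le]
      _ < a • ‖x‖ ^ q + b • ‖y‖ ^ q :=
          (strictConvexOn_rpow hq).2 (norm_nonneg x) (norm_nonneg y) hn ha hb hab

theorem StrictConvexSpace.of_strictConvexOn_norm_rpow {q : ℝ} (hq : 0 < q)
    (h : StrictConvexOn ℝ Set.univ fun x : E => ‖x‖ ^ q) : StrictConvexSpace ℝ E := by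
  refine StrictConvexSpace.of_norm_combo_lt_one fun x y hx hy hxy =>
    ⟨1 / 2, 1 / 2, add_halves 1, ?_⟩
  have := h.2 trivial trivial hxy one_half_pos one_half_pos (add_halves 1)
  dsimp only at this
  rw [hx, hy, Real.one_rpow, smul_eq_mul, mul_one, add_halves] at this
  exact (Real.rpow_lt_rpow_iff (norm_nonneg _) zero_le_one hq).1 (by rwa [Real.one_rpow])

end NormedSpace

theorem PiLp.strictConvexSpace {p : ℝ≥0∞} [Fact (1 ≤ p)] (hp : 1 < p) (hp' : p ≠ ⊤) {ι : Type*}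
    [Fintype ι] {β : ι → Type*} [∀ i, NormedAddCommGroup (β i)] [∀ i, NormedSpace ℝ (β i)]
    [∀ i, StrictConvexSpace ℝ (β i)] : StrictConvexSpace ℝ (PiLp p β) := by
  have hq : 1 < p.toReal := by simpa using (ENNReal.toReal_lt_toReal ENNReal.one_ne_top hp').2 hp
  have hq0 : 0 < p.toReal := zero_lt_one.trans hq
  have hsum : (fun x : PiLp p β => ‖x‖ ^ p.toReal) = fun x => ∑ i, ‖x i‖ ^ p.toReal := by
    ext x
    rw [PiLp.norm_eq_sum hq0, one_div, Real.rpow_inv_rpow (by positivity) hq0.ne']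
  refine StrictConvexSpace.of_strictConvexOn_norm_rpow hq0 ?_
  rw [hsum]
  exact PiLp.strictConvexOn_sum_apply p fun i => strictConvexOn_norm_rpow hq

theorem MeasureTheory.ae_restrict_iff_exists_subset {α : Type*} [MeasurableSpace α]
    {μ : Measure α} {s : Set α} {P : α → Prop} (hs : MeasurableSet s) :
    (∀ᵐ t ∂μ.restrict s, P t) ↔ ∃ M ⊆ s, μ (s \ M) = 0 ∧ ∀ t ∈ M, P t := by
  rw [ae_restrict_iff' hs, ae_iff]
  constructor
  · intro h
    refine ⟨s ∩ {t | P t}, Set.inter_subset_left, measure_mono_null ?_ h, fun t ht => ht.2⟩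
    exact fun t ⟨hts, htM⟩ hP => htM ⟨hts, hP hts⟩
  · rintro ⟨M, -, hnull, hM⟩
    refine measure_mono_null (fun t ht => ?_) hnull
    exact ⟨of_not_imp ht, fun htM => ht fun _ => hM t htM⟩

section Integral

variable {α E : Type*} [MeasurableSpace α] {μ : Measure α}
  [NormedAddCommGroup E] [NormedSpace ℝ E]

theorem ContinuousLinearMap.le_norm_of_opNorm_le_one {g : StrongDual ℝ E} (hg : ‖g‖ ≤ 1)
    (x : E) : g x ≤ ‖x‖ :=
  (le_abs_self _).trans (by simpa using g.le_of_opNorm_le hg x)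

theorem sameRay_of_dual_apply_eq_norm [StrictConvexSpace ℝ E] {g : StrongDual ℝ E}
    (hg : ‖g‖ ≤ 1) {x y : E} (hx : g x = ‖x‖) (hy : g y = ‖y‖) : SameRay ℝ x y :=
  sameRay_iff_norm_add.2 <| (norm_add_le x y).antisymm <|
    calc ‖x‖ + ‖y‖ = g (x + y) := by rw [map_add, hx, hy]
      _ ≤ ‖x + y‖ := g.le_norm_of_opNorm_le_one hg _

variable [CompleteSpace E] {f : α → E}

theorem exists_dual_ae_eq_norm_of_norm_integral_eq (hf : Integrable f μ)
    (h : ‖∫ t, f t ∂μ‖ = ∫ t, ‖f t‖ ∂μ) :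
    ∃ g : StrongDual ℝ E, ‖g‖ ≤ 1 ∧ ∀ᵐ t ∂μ, g (f t) = ‖f t‖ := by
  obtain ⟨g, hg, hgv⟩ := exists_dual_vector'' ℝ (∫ t, f t ∂μ)
  have hgf : Integrable (fun t => g (f t)) μ := g.integrable_comp hf
  have hgap : ∫ t, (‖f t‖ - g (f t)) ∂μ = 0 := by
    rw [integral_sub hf.norm hgf, g.integral_comp_comm hf, hgv, h]
    exact sub_self _
  have hgap_ae := (integral_eq_zero_iff_of_nonneg
    (fun t => sub_nonneg.2 (g.le_norm_of_opNorm_le_one hg (f t))) (hf.norm.sub hgf)).1 hgap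
  exact ⟨g, hg, hgap_ae.mono fun t ht => (sub_eq_zero.1 ht).symm⟩

theorem exists_subset_sameRay_of_norm_setIntegral_eq [StrictConvexSpace ℝ E] {s : Set α}
    (hs : MeasurableSet s) (hf : IntegrableOn f s μ)
    (h : ‖∫ t in s, f t ∂μ‖ = ∫ t in s, ‖f t‖ ∂μ) :
    ∃ M ⊆ s, μ (s \ M) = 0 ∧ ∀ t ∈ M, ∀ t' ∈ M, SameRay ℝ (f t) (f t') := by
  obtain ⟨g, hg, hae⟩ := exists_dual_ae_eq_norm_of_norm_integral_eq hf h
  obtain ⟨M, hMs, hnull, hM⟩ := (ae_restrict_iff_exists_subset hs).1 hae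
  exact ⟨M, hMs, hnull, fun t ht t' ht' => sameRay_of_dual_apply_eq_norm hg (hM t ht) (hM t' ht')⟩

theorem norm_integral_eq_integral_norm_of_ae_eq_nonneg_smul {v : E} (hv : v ≠ 0)
    (h : ∀ᵐ t ∂μ, ∃ l : ℝ, 0 ≤ l ∧ f t = l • v) : ‖∫ t, f t ∂μ‖ = ∫ t, ‖f t‖ ∂μ := by
  have hv' : ‖v‖ ≠ 0 := norm_ne_zero_iff.2 hv
  have hae : ∀ᵐ t ∂μ, f t = (‖f t‖ / ‖v‖) • v := h.mono fun t ⟨l, hl, ht⟩ => by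
    rw [ht, norm_smul_of_nonneg hl, mul_div_cancel_right₀ _ hv']
  rw [integral_congr_ae hae, integral_smul_const, integral_div,
    norm_smul_of_nonneg (div_nonneg (integral_nonneg fun _ => norm_nonneg _) (norm_nonneg _)),
    div_mul_cancel₀ _ hv']

end Integral

theorem stmt_7_general (p : ℝ≥0∞) [Fact (1 ≤ p)] (hp : 1 < p) (hptop : p ≠ ⊤)
    (Θ : ℝ → PiLp p (fun _ : Fin 2 => ℝ))
    (hint : IntegrableOn Θ (Set.Ioo (0 : ℝ) 1) volume) :
    ‖∫ t in Set.Ioo (0 : ℝ) 1, Θ t‖ ≤ (∫ t in Set.Ioo (0 : ℝ) 1, ‖Θ t‖) ∧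
    (‖∫ t in Set.Ioo (0 : ℝ) 1, Θ t‖ = (∫ t in Set.Ioo (0 : ℝ) 1, ‖Θ t‖) ↔
      ((∀ᵐ t ∂(volume.restrict (Set.Ioo (0 : ℝ) 1)), Θ t = 0) ∨
        ∃ M ⊆ Set.Ioo (0 : ℝ) 1, volume (Set.Ioo (0 : ℝ) 1 \ M) = 0 ∧
          ∃ t₀ ∈ M, Θ t₀ ≠ 0 ∧ ∀ t ∈ M, ∃ l : ℝ, 0 ≤ l ∧ Θ t = l • Θ t₀)) := by
  have : StrictConvexSpace ℝ (PiLp p fun _ : Fin 2 => ℝ) := PiLp.strictConvexSpace hp hptop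
  refine ⟨norm_integral_le_integral_norm _, fun heq => ?_, ?_⟩
  · obtain ⟨M, hMs, hnull, hray⟩ :=
      exists_subset_sameRay_of_norm_setIntegral_eq measurableSet_Ioo hint heq
    by_cases hzero : ∀ t ∈ M, Θ t = 0
    · exact Or.inl ((ae_restrict_iff_exists_subset measurableSet_Ioo).2 ⟨M, hMs, hnull, hzero⟩)
    push Not at hzero
    obtain ⟨t₀, ht₀, hne⟩ := hzero
    exact Or.inr ⟨M, hMs, hnull, t₀, ht₀, hne,
      fun t ht => (hray t ht t₀ ht₀).exists_nonneg_right hne⟩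
  · rintro (hzero | ⟨M, hMs, hnull, t₀, -, hne, hray⟩)
    · rw [integral_eq_zero_of_ae hzero,
        integral_eq_zero_of_ae (hzero.mono fun t ht => by simp [ht]), norm_zero]
    · exact norm_integral_eq_integral_norm_of_ae_eq_nonneg_smul hne
        ((ae_restrict_iff_exists_subset measurableSet_Ioo).2 ⟨M, hMs, hnull, hray⟩)

/-- Integral Minkowski inequality in `ℓ^p(ℝ²)`, `1 < p < ∞`, with its equality case:
`‖∫₀¹ Θ‖ ≤ ∫₀¹ ‖Θ‖`, with equality iff `Θ = 0` a.e. or all values of `Θ` (on a set of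
full measure) are nonnegative multiples of a common nonzero value. -/
theorem stmt_7 (p : ℝ≥0∞) [Fact (1 ≤ p)] (hp : 1 < p) (hptop : p ≠ ⊤)
    (Θ : ℝ → PiLp p (fun _ : Fin 2 => ℝ))
    (hcont : ContinuousOn Θ (Set.Ioo 0 1))
    (hint : IntegrableOn Θ (Set.Ioo (0 : ℝ) 1) volume) :
    ‖∫ t in Set.Ioo (0 : ℝ) 1, Θ t‖ ≤ (∫ t in Set.Ioo (0 : ℝ) 1, ‖Θ t‖) ∧
    (‖∫ t in Set.Ioo (0 : ℝ) 1, Θ t‖ = (∫ t in Set.Ioo (0 : ℝ) 1, ‖Θ t‖) ↔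
      ((∀ᵐ t ∂(volume.restrict (Set.Ioo (0 : ℝ) 1)), Θ t = 0) ∨
        ∃ M ⊆ Set.Ioo (0 : ℝ) 1, volume (Set.Ioo (0 : ℝ) 1 \ M) = 0 ∧
          ∃ t₀ ∈ M, Θ t₀ ≠ 0 ∧ ∀ t ∈ M, ∃ l : ℝ, 0 ≤ l ∧ Θ t = l • Θ t₀)) :=
  stmt_7_general p hp hptop Θ hint
end

section
/- Let 1 < p < ∞, α ≥ 0, and ξ ∈ ∂𝔻. Define f_{c,ξ} = ĥ_c/‖ĥ_c‖_{A^p_α} where ĥ_c(z) = (ξ−z)^{−c} and c < (2+α)/p. Let g ∈ H^∞(𝔻) be a bounded holomorphic function that extends continuously to 𝔻̄ ∩ B(ξ, ε) for some ε > 0. Then lim_{c → (2+α)/p} ‖f_{c,ξ} · g‖_{A^p_α} = |g(ξ)|. -/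
/-!
Write `K_s(z) = |ξ - z|^{-s} (1 + α)(1 - |z|²)^α`, so that `‖ĥ_c g‖^p = ∫_𝔻 |g|^p K_{cp}` and
`‖ĥ_c‖^p = ∫_𝔻 K_{cp}`. For `s < 2 + α` the kernel is integrable, since `1 - |z|² ≤ 2|ξ - z|`
reduces it to the planar singularity `|ξ - z|^{α - s}`. As `s ↑ 2 + α` its total mass blows up:
the disjoint balls `B((1 - 2^{-k})ξ, 2^{-k}/4)`, on which both `|ξ - z|` and `1 - |z|` are
comparable to `2^{-k}`, contribute a geometric series of ratio `2^{-(2 + α - s)}`. Off any ball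
`B(ξ, r)` the kernel stays bounded by `(1 + α) r^{-s}`, so the normalised kernels concentrate at `ξ`
and `∫ |g|^p K_s / ∫ K_s → |g(ξ)|^p`, because `|g|^p` is bounded on `𝔻` and continuous at `ξ`.
-/

open Metric MeasureTheory

/-- The `A^p_α` norm (as an integral over the unit disk with the weight
`(1+α)(1-|z|²)^α`). -/
noncomputable def bergNorm (p α : ℝ) (f : ℂ → ℂ) : ℝ :=
  (∫ z in ball (0 : ℂ) 1,
      ‖f z‖ ^ p * ((1 + α) * (1 - ‖z‖ ^ 2) ^ α)) ^ (1 / p)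

open Set Filter Topology

section Concentration

variable {X : Type*} [MeasurableSpace X] {μ : Measure X}

theorem abs_integral_mul_sub_le {K h : X → ℝ} {U : Set X} {a η D : ℝ} (hU : MeasurableSet U)
    (hK : Integrable K μ) (hK0 : 0 ≤ᵐ[μ] K) (hh : AEStronglyMeasurable h μ) (hη : 0 ≤ η)
    (hnear : ∀ᵐ x ∂μ, x ∈ U → |h x - a| ≤ η) (hfar : ∀ᵐ x ∂μ, |h x - a| ≤ D) :
    |∫ x, h x * K x ∂μ - a * ∫ x, K x ∂μ| ≤ η * ∫ x, K x ∂μ + D * ∫ x in Uᶜ, K x ∂μ := by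
  have hdiff : Integrable (fun x => (h x - a) * K x) μ :=
    hK.bdd_mul (hh.sub aestronglyMeasurable_const) (by simpa only [Real.norm_eq_abs] using hfar)
  have hbound : Integrable (fun x => η * K x + Uᶜ.indicator (fun x => D * K x) x) μ :=
    (hK.const_mul η).add ((hK.const_mul D).indicator hU.compl)
  calc |∫ x, h x * K x ∂μ - a * ∫ x, K x ∂μ|
      = |∫ x, (h x - a) * K x ∂μ| := by
        have hhK : Integrable (fun x => h x * K x) μ :=
          (hdiff.add (hK.const_mul a)).congr (.of_forall fun x => by simp only [Pi.add_apply]; ring)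
        rw [← integral_const_mul, ← integral_sub hhK (hK.const_mul a)]
        simp only [sub_mul]
    _ ≤ ∫ x, |(h x - a) * K x| ∂μ := abs_integral_le_integral_abs
    _ ≤ ∫ x, (η * K x + Uᶜ.indicator (fun x => D * K x) x) ∂μ := by
        refine integral_mono_ae hdiff.abs hbound ?_
        filter_upwards [hK0, hnear, hfar] with x hKx hnx hfx
        rw [abs_mul, abs_of_nonneg hKx]
        by_cases hx : x ∈ U
        · simp only [indicator_of_notMem (notMem_compl_iff.2 hx), add_zero]
          exact mul_le_mul_of_nonneg_right (hnx hx) hKx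
        · rw [indicator_of_mem (mem_compl hx)]
          nlinarith [mul_le_mul_of_nonneg_right hfx hKx, mul_nonneg hη hKx]
    _ = η * ∫ x, K x ∂μ + D * ∫ x in Uᶜ, K x ∂μ := by
        rw [integral_add (hK.const_mul η) ((hK.const_mul D).indicator hU.compl),
          integral_indicator hU.compl, integral_const_mul, integral_const_mul]

variable [PseudoMetricSpace X] [OpensMeasurableSpace X]

theorem tendsto_integral_mul_div_integral_of_concentrate {ι : Type*} {l : Filter ι}
    {K : ι → X → ℝ} {h : X → ℝ} {x₀ : X} {S : Set X} {C : ℝ}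
    (hK : ∀ᶠ i in l, Integrable (K i) μ) (hK0 : ∀ i, 0 ≤ᵐ[μ] K i)
    (hK_pos : ∀ᶠ i in l, 0 < ∫ x, K i x ∂μ)
    (hK_far : ∀ r > 0, Tendsto (fun i => (∫ x in (ball x₀ r)ᶜ, K i x ∂μ) / ∫ x, K i x ∂μ) l (𝓝 0))
    (hh : AEStronglyMeasurable h μ) (hh_bdd : ∀ᵐ x ∂μ, |h x| ≤ C) (hS : ∀ᵐ x ∂μ, x ∈ S)
    (hh_cont : ContinuousWithinAt h S x₀) :
    Tendsto (fun i => (∫ x, h x * K i x ∂μ) / ∫ x, K i x ∂μ) l (𝓝 (h x₀)) := by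
  rw [Metric.tendsto_nhds]
  intro ε hε
  obtain ⟨r, hr, hnear⟩ := Metric.continuousWithinAt_iff.1 hh_cont (ε / 2) (half_pos hε)
  set D := |C| + |h x₀|
  have hfar : ∀ᵐ x ∂μ, |h x - h x₀| ≤ D := hh_bdd.mono fun x hx =>
    (abs_sub _ _).trans (by linarith [le_abs_self C])
  have hfar_small : ∀ᶠ i in l, D * ((∫ x in (ball x₀ r)ᶜ, K i x ∂μ) / ∫ x, K i x ∂μ) < ε / 2 := by
    have := (hK_far r hr).const_mul D
    rw [mul_zero] at this
    exact this.eventually (gt_mem_nhds (half_pos hε))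
  filter_upwards [hK, hK_pos, hfar_small] with i hKi hpos hsmall
  have hest := abs_integral_mul_sub_le measurableSet_ball hKi (hK0 i) hh (half_pos hε).le
    (hS.mono fun x hxS hx => (hnear hxS hx).le) hfar
  have hdiv : (∫ x, h x * K i x ∂μ) / (∫ x, K i x ∂μ) - h x₀
      = (∫ x, h x * K i x ∂μ - h x₀ * ∫ x, K i x ∂μ) / ∫ x, K i x ∂μ := by
    field_simp
  rw [Real.dist_eq, hdiv, abs_div, abs_of_pos hpos, div_lt_iff₀ hpos]
  rw [mul_div_assoc', div_lt_iff₀ hpos] at hsmall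
  linarith

end Concentration

section LocalIntegrability

variable {E : Type*} [NormedAddCommGroup E] [NormedSpace ℝ E] [MeasurableSpace E] [BorelSpace E]
  [FiniteDimensional ℝ E] [Nontrivial E] (μ : Measure E) [μ.IsAddHaarMeasure]

theorem integrableOn_ball_norm_rpow {R t : ℝ} (hR : 0 < R) (ht : -(Module.finrank ℝ E : ℝ) < t) :
    IntegrableOn (fun x : E => ‖x‖ ^ t) (ball 0 R) μ := by
  have hn : 1 ≤ Module.finrank ℝ E := Module.finrank_pos
  rw [integrableOn_fun_norm_addHaar μ (f := fun y => y ^ t)]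
  refine ((intervalIntegral.integrableOn_Ioo_rpow_iff hR).2
    (by push_cast [hn]; linarith : -1 < t + ((Module.finrank ℝ E - 1 : ℕ) : ℝ))).congr_fun
    (fun y hy => ?_) measurableSet_Ioo
  simp only [Real.rpow_add hy.1, Real.rpow_natCast, smul_eq_mul, mul_comm]

theorem integrableOn_ball_norm_sub_rpow (x₀ : E) {R t : ℝ} (hR : 0 < R)
    (ht : -(Module.finrank ℝ E : ℝ) < t) :
    IntegrableOn (fun x => ‖x₀ - x‖ ^ t) (ball x₀ R) μ := by
  have h := ((integrable_indicator_iff measurableSet_ball).2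
    (integrableOn_ball_norm_rpow μ hR ht)).comp_sub_left x₀
  rw [← integrable_indicator_iff measurableSet_ball]
  refine h.congr (.of_forall fun x => ?_)
  simp only [indicator, mem_ball, dist_eq_norm, sub_zero, norm_sub_rev x x₀]

end LocalIntegrability

noncomputable def bergmanWeight (α : ℝ) (z : ℂ) : ℝ := (1 + α) * (1 - ‖z‖ ^ 2) ^ α

noncomputable def poleKernel (ξ : ℂ) (α s : ℝ) (z : ℂ) : ℝ := ‖ξ - z‖ ^ (-s) * bergmanWeight α z

section UnitDisk

variable {ξ z : ℂ} {α s : ℝ}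

theorem bergmanWeight_nonneg (hα : -1 ≤ α) (hz : z ∈ ball (0 : ℂ) 1) : 0 ≤ bergmanWeight α z := by
  rw [mem_ball_zero_iff] at hz
  have : 0 ≤ 1 - ‖z‖ ^ 2 := by nlinarith [norm_nonneg z]
  unfold bergmanWeight
  have := Real.rpow_nonneg this α
  nlinarith

theorem bergmanWeight_le (hα : 0 ≤ α) (hz : z ∈ ball (0 : ℂ) 1) : bergmanWeight α z ≤ 1 + α := by
  rw [mem_ball_zero_iff] at hz
  have : (1 - ‖z‖ ^ 2) ^ α ≤ 1 :=
    Real.rpow_le_one (by nlinarith [norm_nonneg z]) (by nlinarith [norm_nonneg z]) hα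
  unfold bergmanWeight
  nlinarith

theorem poleKernel_nonneg (hα : -1 ≤ α) (hz : z ∈ ball (0 : ℂ) 1) : 0 ≤ poleKernel ξ α s z :=
  mul_nonneg (by positivity) (bergmanWeight_nonneg hα hz)

theorem one_sub_norm_sq_le (hξ : ‖ξ‖ = 1) (hz : z ∈ ball (0 : ℂ) 1) :
    1 - ‖z‖ ^ 2 ≤ 2 * ‖ξ - z‖ := by
  rw [mem_ball_zero_iff] at hz
  have := norm_sub_norm_le ξ z
  nlinarith [norm_nonneg z]

theorem bergmanWeight_le_norm_sub (hξ : ‖ξ‖ = 1) (hα : 0 ≤ α) (hz : z ∈ ball (0 : ℂ) 1) :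
    bergmanWeight α z ≤ (1 + α) * 2 ^ α * ‖ξ - z‖ ^ α := by
  have h0 : 0 ≤ 1 - ‖z‖ ^ 2 := by
    rw [mem_ball_zero_iff] at hz; nlinarith [norm_nonneg z]
  calc bergmanWeight α z ≤ (1 + α) * (2 * ‖ξ - z‖) ^ α := by
        unfold bergmanWeight
        gcongr
        exact one_sub_norm_sq_le hξ hz
    _ = (1 + α) * 2 ^ α * ‖ξ - z‖ ^ α := by
        rw [Real.mul_rpow zero_le_two (norm_nonneg _), mul_assoc]

theorem norm_sub_pos_of_mem_ball (hξ : ‖ξ‖ = 1) (hz : z ∈ ball (0 : ℂ) 1) : 0 < ‖ξ - z‖ := by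
  rw [mem_ball_zero_iff] at hz
  linarith [norm_sub_norm_le ξ z]

theorem continuousOn_poleKernel (hξ : ‖ξ‖ = 1) (α s : ℝ) :
    ContinuousOn (poleKernel ξ α s) (ball (0 : ℂ) 1) := by
  intro z hz
  have hξz : ‖ξ - z‖ ≠ 0 := (norm_sub_pos_of_mem_ball hξ hz).ne'
  have hw : 1 - ‖z‖ ^ 2 ≠ 0 := by
    rw [mem_ball_zero_iff] at hz; nlinarith [norm_nonneg z]
  refine ContinuousAt.continuousWithinAt ?_
  exact ((continuous_const.sub continuous_id).norm.continuousAt.rpow_const (Or.inl hξz)).mul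
    (continuousAt_const.mul
      ((continuous_const.sub (continuous_norm.pow 2)).continuousAt.rpow_const (Or.inl hw)))

theorem integrableOn_poleKernel (hξ : ‖ξ‖ = 1) (hα : 0 ≤ α) (hs : s < 2 + α) :
    IntegrableOn (poleKernel ξ α s) (ball (0 : ℂ) 1) := by
  have hmodel : IntegrableOn (fun z => (1 + α) * 2 ^ α * ‖ξ - z‖ ^ (α - s)) (ball (0 : ℂ) 1) :=
    ((integrableOn_ball_norm_sub_rpow volume ξ two_pos (by simp; linarith)).mono_set
      (ball_subset_ball' (by simp [hξ]; norm_num))).const_mul _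
  refine hmodel.mono' ((continuousOn_poleKernel hξ α s).aestronglyMeasurable measurableSet_ball) ?_
  refine (ae_restrict_mem measurableSet_ball).mono fun z hz => ?_
  have hξz := norm_sub_pos_of_mem_ball hξ hz
  rw [Real.norm_of_nonneg (poleKernel_nonneg (by linarith) hz)]
  calc poleKernel ξ α s z ≤ ‖ξ - z‖ ^ (-s) * ((1 + α) * 2 ^ α * ‖ξ - z‖ ^ α) := by
        unfold poleKernel
        gcongr
        exact bergmanWeight_le_norm_sub hξ hα hz
    _ = (1 + α) * 2 ^ α * ‖ξ - z‖ ^ (α - s) := by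
        rw [sub_eq_neg_add α, Real.rpow_add hξz]
        ring

theorem norm_ofReal_mul_of_norm_eq_one (hξ : ‖ξ‖ = 1) (t : ℝ) : ‖(t : ℂ) * ξ‖ = |t| := by
  rw [norm_mul, Complex.norm_real, Real.norm_eq_abs, hξ, mul_one]

variable (ξ) in
noncomputable def radialBall (d : ℝ) : Set ℂ := ball (((1 - d : ℝ) : ℂ) * ξ) (d / 4)

theorem norm_lt_of_mem_radialBall (hξ : ‖ξ‖ = 1) {d : ℝ} (hd1 : d ≤ 1)
    (hz : z ∈ radialBall ξ d) : ‖z‖ < 1 - 3 * d / 4 := by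
  rw [radialBall, mem_ball, dist_eq_norm] at hz
  have hc : ‖((1 - d : ℝ) : ℂ) * ξ‖ = 1 - d := by
    rw [norm_ofReal_mul_of_norm_eq_one hξ, abs_of_nonneg (by linarith)]
  linarith [norm_le_norm_add_norm_sub' z (((1 - d : ℝ) : ℂ) * ξ)]

theorem norm_sub_lt_of_mem_radialBall (hξ : ‖ξ‖ = 1) {d : ℝ} (hd0 : 0 ≤ d)
    (hz : z ∈ radialBall ξ d) : ‖ξ - z‖ < 5 * d / 4 := by
  rw [radialBall, mem_ball, dist_eq_norm] at hz
  have hc : ‖ξ - ((1 - d : ℝ) : ℂ) * ξ‖ = d := by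
    rw [show ξ - ((1 - d : ℝ) : ℂ) * ξ = (d : ℂ) * ξ by push_cast; ring,
      norm_ofReal_mul_of_norm_eq_one hξ, abs_of_nonneg hd0]
  calc ‖ξ - z‖ ≤ ‖ξ - ((1 - d : ℝ) : ℂ) * ξ‖ + ‖z - ((1 - d : ℝ) : ℂ) * ξ‖ := by
        simpa [norm_sub_rev z] using norm_sub_le_norm_sub_add_norm_sub ξ (((1 - d : ℝ) : ℂ) * ξ) z
    _ < 5 * d / 4 := by linarith

theorem radialBall_subset_ball (hξ : ‖ξ‖ = 1) {d : ℝ} (hd0 : 0 ≤ d) (hd1 : d ≤ 1) :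
    radialBall ξ d ⊆ ball (0 : ℂ) 1 := fun z hz => by
  rw [mem_ball_zero_iff]
  linarith [norm_lt_of_mem_radialBall hξ hd1 hz]

theorem disjoint_radialBall (hξ : ‖ξ‖ = 1) {d d' : ℝ} (hd' : 0 ≤ d') (hdd' : d' ≤ d / 2) :
    Disjoint (radialBall ξ d) (radialBall ξ d') := by
  refine ball_disjoint_ball ?_
  rw [dist_eq_norm, show ((1 - d : ℝ) : ℂ) * ξ - ((1 - d' : ℝ) : ℂ) * ξ = ((d' - d : ℝ) : ℂ) * ξ by
    push_cast; ring, norm_ofReal_mul_of_norm_eq_one hξ, abs_of_nonpos (by linarith)]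
  linarith

theorem le_poleKernel_of_mem_radialBall (hξ : ‖ξ‖ = 1) (hα : 0 ≤ α) (hs : 0 ≤ s) {d : ℝ}
    (hd0 : 0 < d) (hd1 : d ≤ 1) (hz : z ∈ radialBall ξ d) :
    (2 * d) ^ (-s) * (d / 2) ^ α ≤ poleKernel ξ α s z := by
  have hz0 := radialBall_subset_ball hξ hd0.le hd1 hz
  have hnorm := norm_lt_of_mem_radialBall hξ hd1 hz
  have hw : d / 2 ≤ 1 - ‖z‖ ^ 2 := by nlinarith [norm_nonneg z]
  have hkernel : (2 * d) ^ (-s) ≤ ‖ξ - z‖ ^ (-s) :=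
    Real.rpow_le_rpow_of_nonpos (norm_sub_pos_of_mem_ball hξ hz0)
      (by linarith [norm_sub_lt_of_mem_radialBall hξ hd0.le hz]) (neg_nonpos.2 hs)
  have hweight : (d / 2) ^ α ≤ (1 + α) * (1 - ‖z‖ ^ 2) ^ α := by
    have : 0 ≤ (1 - ‖z‖ ^ 2) ^ α := Real.rpow_nonneg (by linarith) α
    nlinarith [Real.rpow_le_rpow (by linarith) hw hα]
  unfold poleKernel bergmanWeight
  gcongr

theorem ofReal_le_lintegral_radialBall (hξ : ‖ξ‖ = 1) (hα : 0 ≤ α) (hs0 : 0 ≤ s)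
    (hs : s ≤ 2 + α) {d : ℝ} (hd0 : 0 < d) (hd1 : d ≤ 1) :
    ENNReal.ofReal (2 ^ (-(2 + 2 * α)) * (3 / 16) * d ^ (2 + α - s)) ≤
      ∫⁻ z in radialBall ξ d, ENNReal.ofReal (poleKernel ξ α s z) := by
  set m := (2 * d) ^ (-s) * (d / 2) ^ α
  have hvol : ENNReal.ofReal ((d / 4) ^ 2 * 3) ≤ volume (radialBall ξ d) := by
    rw [radialBall, Complex.volume_ball, ENNReal.ofReal_mul (by positivity),
      ENNReal.ofReal_pow (by positivity)]
    gcongr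
    rw [← ENNReal.ofReal_coe_nnreal]
    exact ENNReal.ofReal_le_ofReal (by simpa using Real.pi_gt_three.le)
  have hconst : 2 ^ (-(2 + 2 * α)) * (3 / 16) * d ^ (2 + α - s) ≤ m * ((d / 4) ^ 2 * 3) := by
    have h2 : (2 : ℝ) ^ (-(2 + 2 * α)) ≤ 2 ^ (-s) * 2 ^ (-α) := by
      rw [← Real.rpow_add two_pos]
      exact Real.rpow_le_rpow_of_exponent_le one_le_two (by linarith)
    have hd : d ^ (2 + α - s) = d ^ (-s) * d ^ α * d ^ (2 : ℝ) := by
      rw [← Real.rpow_add hd0, ← Real.rpow_add hd0]; ring_nf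
    have hm : m * ((d / 4) ^ 2 * 3) =
        2 ^ (-s) * 2 ^ (-α) * (3 / 16) * (d ^ (-s) * d ^ α * d ^ (2 : ℝ)) := by
      simp only [m, Real.mul_rpow two_pos.le hd0.le, Real.div_rpow hd0.le two_pos.le,
        Real.rpow_neg two_pos.le α, Real.rpow_two]
      ring
    rw [hd, hm]
    gcongr
  calc ENNReal.ofReal (2 ^ (-(2 + 2 * α)) * (3 / 16) * d ^ (2 + α - s))
      ≤ ENNReal.ofReal m * ENNReal.ofReal ((d / 4) ^ 2 * 3) := by
        rw [← ENNReal.ofReal_mul (by positivity)]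
        exact ENNReal.ofReal_le_ofReal hconst
    _ ≤ ENNReal.ofReal m * volume (radialBall ξ d) := by gcongr
    _ = ∫⁻ z in radialBall ξ d, ENNReal.ofReal m := (setLIntegral_const _ _).symm
    _ ≤ ∫⁻ z in radialBall ξ d, ENNReal.ofReal (poleKernel ξ α s z) :=
        setLIntegral_mono' measurableSet_ball fun z hz =>
          ENNReal.ofReal_le_ofReal (le_poleKernel_of_mem_radialBall hξ hα hs0 hd0 hd1 hz)

theorem one_sub_half_rpow_le {σ : ℝ} (hσ : 0 ≤ σ) : 1 - (1 / 2 : ℝ) ^ σ ≤ σ := by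
  have hlog : Real.log (1 / 2) = -Real.log 2 := by rw [one_div, Real.log_inv]
  have := Real.add_one_le_exp (-Real.log 2 * σ)
  rw [Real.rpow_def_of_pos (by norm_num), hlog]
  nlinarith [Real.log_two_lt_d9]

theorem ofReal_div_le_lintegral_poleKernel (hξ : ‖ξ‖ = 1) (hα : 0 ≤ α) (hs0 : 0 ≤ s)
    (hs : s < 2 + α) :
    ENNReal.ofReal (2 ^ (-(2 + 2 * α)) * (3 / 16) / (2 + α - s)) ≤
      ∫⁻ z in ball (0 : ℂ) 1, ENNReal.ofReal (poleKernel ξ α s z) := by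
  set c : ℝ := 2 ^ (-(2 + 2 * α)) * (3 / 16)
  set σ := 2 + α - s
  set q : ℝ := (1 / 2) ^ σ
  have hσ : 0 < σ := by simp only [σ]; linarith
  have hq1 : q < 1 := Real.rpow_lt_one (by norm_num) (by norm_num) hσ
  have hd0 : ∀ k : ℕ, (0 : ℝ) < (1 / 2) ^ k := fun k => by positivity
  have hd1 : ∀ k : ℕ, (1 / 2 : ℝ) ^ k ≤ 1 := fun k => pow_le_one₀ (by norm_num) (by norm_num)
  have hdisj : Pairwise (Function.onFun Disjoint fun k : ℕ => radialBall ξ ((1 / 2) ^ k)) := by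
    refine pairwise_disjoint_on _ |>.2 fun j k hjk => disjoint_radialBall hξ (hd0 k).le ?_
    calc (1 / 2 : ℝ) ^ k ≤ (1 / 2) ^ (j + 1) := pow_le_pow_of_le_one (by norm_num) (by norm_num) hjk
      _ = (1 / 2) ^ j / 2 := by ring
  have hterm : ∀ k : ℕ, ENNReal.ofReal c * ENNReal.ofReal q ^ k ≤
      ∫⁻ z in radialBall ξ ((1 / 2) ^ k), ENNReal.ofReal (poleKernel ξ α s z) := fun k => by
    rw [← ENNReal.ofReal_pow (by positivity), ← ENNReal.ofReal_mul (by positivity),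
      ← Real.rpow_natCast, ← Real.rpow_mul (by norm_num), mul_comm σ,
      Real.rpow_mul (by norm_num), Real.rpow_natCast]
    exact ofReal_le_lintegral_radialBall hξ hα hs0 hs.le (hd0 k) (hd1 k)
  have hgeom : ENNReal.ofReal (c / σ) ≤ ENNReal.ofReal c * (1 - ENNReal.ofReal q)⁻¹ := by
    rw [← ENNReal.ofReal_one, ← ENNReal.ofReal_sub _ (by positivity),
      ← ENNReal.ofReal_inv_of_pos (by linarith), ← ENNReal.ofReal_mul (by positivity)]
    refine ENNReal.ofReal_le_ofReal (div_le_div_of_nonneg_left (by positivity) (by linarith) ?_)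
    exact one_sub_half_rpow_le hσ.le
  calc ENNReal.ofReal (c / σ) ≤ ∑' k : ℕ, ENNReal.ofReal c * ENNReal.ofReal q ^ k := by
        rwa [ENNReal.tsum_mul_left, ENNReal.tsum_geometric]
    _ ≤ ∑' k : ℕ, ∫⁻ z in radialBall ξ ((1 / 2) ^ k), ENNReal.ofReal (poleKernel ξ α s z) :=
        ENNReal.tsum_le_tsum hterm
    _ = ∫⁻ z in ⋃ k : ℕ, radialBall ξ ((1 / 2) ^ k), ENNReal.ofReal (poleKernel ξ α s z) :=
        (lintegral_iUnion (fun _ => measurableSet_ball) hdisj _).symm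
    _ ≤ ∫⁻ z in ball (0 : ℂ) 1, ENNReal.ofReal (poleKernel ξ α s z) :=
        lintegral_mono_set (iUnion_subset fun k => radialBall_subset_ball hξ (hd0 k).le (hd1 k))

theorem tendsto_integral_poleKernel_atTop (hξ : ‖ξ‖ = 1) (hα : 0 ≤ α) :
    Tendsto (fun s => ∫ z in ball (0 : ℂ) 1, poleKernel ξ α s z) (𝓝[<] (2 + α)) atTop := by
  set c : ℝ := 2 ^ (-(2 + 2 * α)) * (3 / 16)
  have hgap : Tendsto (fun s => 2 + α - s) (𝓝[<] (2 + α)) (𝓝[>] 0) := by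
    refine tendsto_nhdsWithin_of_tendsto_nhds_of_eventually_within _ ?_
      (eventually_nhdsWithin_of_forall fun s (hs : s < 2 + α) => sub_pos.2 hs)
    have : Tendsto (fun s : ℝ => 2 + α - s) (𝓝 (2 + α)) (𝓝 (2 + α - (2 + α))) :=
      tendsto_const_nhds.sub tendsto_id
    rw [sub_self] at this
    exact this.mono_left nhdsWithin_le_nhds
  refine tendsto_atTop_mono' _ ?_
    (hgap.inv_tendsto_nhdsGT_zero.const_mul_atTop (by positivity : 0 < c))
  filter_upwards [Ioo_mem_nhdsLT (by linarith : (0 : ℝ) < 2 + α)] with s hs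
  have hK0 : 0 ≤ᵐ[volume.restrict (ball (0 : ℂ) 1)] poleKernel ξ α s :=
    (ae_restrict_mem measurableSet_ball).mono fun z hz => poleKernel_nonneg (by linarith) hz
  rw [← ENNReal.ofReal_le_ofReal_iff (integral_nonneg_of_ae hK0),
    ofReal_integral_eq_lintegral_ofReal (integrableOn_poleKernel hξ hα hs.2) hK0]
  exact ofReal_div_le_lintegral_poleKernel hξ hα hs.1.le hs.2

theorem setIntegral_compl_ball_poleKernel_le (hα : 0 ≤ α) (hs : 0 ≤ s) {r : ℝ} (hr : 0 < r) :
    ∫ z in (ball ξ r)ᶜ, poleKernel ξ α s z ∂volume.restrict (ball (0 : ℂ) 1) ≤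
      r ^ (-s) * (1 + α) * volume.real (ball (0 : ℂ) 1) := by
  rw [Measure.restrict_restrict measurableSet_ball.compl]
  refine (Real.le_norm_self _).trans
    ((norm_setIntegral_le_of_norm_le_const (C := r ^ (-s) * (1 + α))
    (measure_inter_lt_top_of_right_ne_top measure_ball_lt_top.ne) fun z hz => ?_).trans ?_)
  · have hfar : r ≤ ‖ξ - z‖ := by
      simpa [dist_eq_norm, norm_sub_rev z] using hz.1
    rw [Real.norm_of_nonneg (poleKernel_nonneg (by linarith) hz.2)]
    exact mul_le_mul (Real.rpow_le_rpow_of_nonpos hr hfar (neg_nonpos.2 hs))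
      (bergmanWeight_le hα hz.2) (bergmanWeight_nonneg (by linarith) hz.2) (by positivity)
  · exact mul_le_mul_of_nonneg_left (measureReal_mono inter_subset_right measure_ball_lt_top.ne)
      (by positivity)

theorem tendsto_setIntegral_compl_ball_div_integral_poleKernel (hξ : ‖ξ‖ = 1) (hα : 0 ≤ α)
    {r : ℝ} (hr : 0 < r) :
    Tendsto (fun s => (∫ z in (ball ξ r)ᶜ, poleKernel ξ α s z ∂volume.restrict (ball (0 : ℂ) 1)) /
        ∫ z in ball (0 : ℂ) 1, poleKernel ξ α s z) (𝓝[<] (2 + α)) (𝓝 0) := by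
  have hF := tendsto_integral_poleKernel_atTop hξ hα
  have hbound : Tendsto (fun s => r ^ (-s) * (1 + α) * volume.real (ball (0 : ℂ) 1)) (𝓝[<] (2 + α))
      (𝓝 (r ^ (-(2 + α)) * (1 + α) * volume.real (ball (0 : ℂ) 1))) :=
    ((((continuous_const.rpow continuous_neg fun _ => Or.inl hr.ne').tendsto _).mul_const
      _).mul_const _).mono_left nhdsWithin_le_nhds
  have hK0 : ∀ s, 0 ≤ᵐ[volume.restrict (ball (0 : ℂ) 1)] poleKernel ξ α s := fun s =>
    (ae_restrict_mem measurableSet_ball).mono fun z hz => poleKernel_nonneg (by linarith) hz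
  refine tendsto_of_tendsto_of_tendsto_of_le_of_le' tendsto_const_nhds (hbound.div_atTop hF) ?_ ?_
  · filter_upwards [hF.eventually_gt_atTop 0] with s hpos
    exact div_nonneg (integral_nonneg_of_ae (ae_restrict_of_ae (hK0 s))) hpos.le
  · filter_upwards [hF.eventually_gt_atTop 0, Ioo_mem_nhdsLT (by linarith : (0 : ℝ) < 2 + α)]
      with s hpos hs
    exact div_le_div_of_nonneg_right (setIntegral_compl_ball_poleKernel_le hα hs.1.le hr) hpos.le

end UnitDisk

theorem bergNorm_cpow_mul (p α c : ℝ) (ξ : ℂ) (g : ℂ → ℂ) :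
    bergNorm p α (fun z => (ξ - z) ^ (-(c : ℂ)) * g z) =
      (∫ z in ball (0 : ℂ) 1, ‖g z‖ ^ p * poleKernel ξ α (c * p) z) ^ (1 / p) := by
  unfold bergNorm poleKernel bergmanWeight
  congr 1
  refine integral_congr_ae (.of_forall fun z => ?_)
  dsimp only
  rw [norm_mul, ← Complex.ofReal_neg, Complex.norm_cpow_real,
    Real.mul_rpow (by positivity) (norm_nonneg _), ← Real.rpow_mul (norm_nonneg _), neg_mul]
  ring

theorem bergNorm_cpow (p α c : ℝ) (ξ : ℂ) :
    bergNorm p α (fun z => (ξ - z) ^ (-(c : ℂ))) =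
      (∫ z in ball (0 : ℂ) 1, poleKernel ξ α (c * p) z) ^ (1 / p) := by
  simpa using bergNorm_cpow_mul p α c ξ fun _ => 1

theorem bergNorm_cpow_mul_div_bergNorm_cpow (p : ℝ) {α : ℝ} (hα : -1 ≤ α) (c : ℝ) (ξ : ℂ)
    (g : ℂ → ℂ) :
    bergNorm p α (fun z => (ξ - z) ^ (-(c : ℂ)) * g z) /
        bergNorm p α (fun z => (ξ - z) ^ (-(c : ℂ))) =
      ((∫ z in ball (0 : ℂ) 1, ‖g z‖ ^ p * poleKernel ξ α (c * p) z) /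
        ∫ z in ball (0 : ℂ) 1, poleKernel ξ α (c * p) z) ^ (1 / p) := by
  rw [bergNorm_cpow_mul, bergNorm_cpow, Real.div_rpow
    (setIntegral_nonneg measurableSet_ball fun z hz =>
      mul_nonneg (by positivity) (poleKernel_nonneg hα hz))
    (setIntegral_nonneg measurableSet_ball fun z hz => poleKernel_nonneg hα hz)]

theorem tendsto_mul_const_nhdsLT {a p : ℝ} (hp : 0 < p) :
    Tendsto (fun c => c * p) (𝓝[<] a) (𝓝[<] (a * p)) :=
  (continuous_mul_const p).continuousWithinAt.tendsto_nhdsWithin fun _ hc =>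
    mul_lt_mul_of_pos_right (mem_Iio.1 hc) hp

/-- For `ĥ_c(z) = (ξ-z)^{-c}` and `g ∈ H^∞` extending continuously to `𝔻̄ ∩ B(ξ,ε)`,
`‖(ĥ_c/‖ĥ_c‖)·g‖_{A^p_α} → |g(ξ)|` as `c ↑ (2+α)/p`. -/
theorem stmt_16 (p α : ℝ) (hp : 1 < p) (hα : 0 ≤ α) (ξ : ℂ) (hξ : ‖ξ‖ = 1)
    (g : ℂ → ℂ) (hgdiff : DifferentiableOn ℂ g (ball (0 : ℂ) 1))
    (hgbdd : ∃ C : ℝ, ∀ z ∈ ball (0 : ℂ) 1, ‖g z‖ ≤ C)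
    (ε : ℝ) (hε : 0 < ε)
    (hgcont : ContinuousOn g (closedBall (0 : ℂ) 1 ∩ ball ξ ε)) :
    Filter.Tendsto
      (fun c : ℝ =>
        bergNorm p α (fun z => (ξ - z) ^ (-(c : ℂ)) * g z) /
          bergNorm p α (fun z => (ξ - z) ^ (-(c : ℂ))))
      (nhdsWithin ((2 + α) / p) (Set.Iio ((2 + α) / p)))
      (nhds ‖g ξ‖) := by
  obtain ⟨C, hC⟩ := hgbdd
  have hp0 : 0 < p := by linarith
  have hgp : ContinuousOn (fun z => ‖g z‖ ^ p) (ball (0 : ℂ) 1) :=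
    hgdiff.continuousOn.norm.rpow_const fun _ _ => Or.inr hp0.le
  have hgξ : ContinuousWithinAt (fun z => ‖g z‖ ^ p) (ball (0 : ℂ) 1) ξ := by
    have hξS : ξ ∈ closedBall (0 : ℂ) 1 ∩ ball ξ ε := ⟨by simp [hξ], mem_ball_self hε⟩
    refine ((hgcont ξ hξS).mono_of_mem_nhdsWithin ?_).norm.rpow_const (Or.inr hp0.le)
    exact inter_mem (mem_of_superset self_mem_nhdsWithin ball_subset_closedBall)
      (mem_nhdsWithin_of_mem_nhds (ball_mem_nhds ξ hε))
  have hbdd : ∀ᵐ z ∂volume.restrict (ball (0 : ℂ) 1), |‖g z‖ ^ p| ≤ C ^ p :=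
    (ae_restrict_mem measurableSet_ball).mono fun z hz => by
      rw [abs_of_nonneg (by positivity)]
      exact Real.rpow_le_rpow (norm_nonneg _) (hC z hz) hp0.le
  have hlim := tendsto_integral_mul_div_integral_of_concentrate
    (eventually_nhdsWithin_of_forall fun s hs => integrableOn_poleKernel hξ hα hs)
    (fun s => (ae_restrict_mem measurableSet_ball).mono fun z hz =>
      poleKernel_nonneg (by linarith) hz)
    ((tendsto_integral_poleKernel_atTop hξ hα).eventually_gt_atTop 0)
    (fun r hr => tendsto_setIntegral_compl_ball_div_integral_poleKernel hξ hα hr)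
    (hgp.aestronglyMeasurable measurableSet_ball) hbdd (ae_restrict_mem measurableSet_ball) hgξ
  have hcp := tendsto_mul_const_nhdsLT (a := (2 + α) / p) hp0
  rw [div_mul_cancel₀ _ hp0.ne'] at hcp
  have hroot := (hlim.comp hcp).rpow_const (p := 1 / p) (Or.inr (by positivity))
  rw [one_div, Real.rpow_rpow_inv (norm_nonneg _) hp0.ne'] at hroot
  refine hroot.congr fun c => ?_
  rw [bergNorm_cpow_mul_div_bergNorm_cpow p (by linarith) c ξ g, one_div]
  rfl
end
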